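/- Let {x_i}_{i∈I} be a Bessel sequence in a separable Hilbert space H with synthesis operator U_x : ℓ²(I) → H. Then for every L ∈ B(H, ℓ²(I)), the sequence {x_i} is a (U_x L)-frame for H; conversely, if {x_i} is a K-frame for some K ∈ B(H), then K = U_x L for some L ∈ B(H, ℓ²(I)). -/

import Mathlib

noncomputable section

variable {H : Type*} [NormedAddCommGroup H] [InnerProductSpace ℂ H] [CompleteSpace H]
variable {I : Type*} [Countable I] [DecidableEq I]

/-- Bessel sequence in a Hilbert space. -/
def IsBessel (f : I → H) : Prop :=
  ∃ B : ℝ, 0 < B ∧ ∀ x : H, ∑' i, ‖(inner ℂ (f i) x : ℂ)‖ ^ 2 ≤ B * ‖x‖ ^ 2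

/-- θ is the analysis (transform) operator of the sequence f:
(θ x)_i = ⟨x, f_i⟩. -/
def IsAnalysisOf (f : I → H) (θ : H →L[ℂ] lp (fun _ : I => ℂ) 2) : Prop :=
  ∀ (x : H) (i : I), (θ x : ∀ _ : I, ℂ) i = (inner ℂ (f i) x : ℂ)

/-- U is the synthesis (pre-frame) operator of the sequence f, i.e. its adjoint
is the analysis operator of f. -/
def IsSynthesisOf (f : I → H) (U : lp (fun _ : I => ℂ) 2 →L[ℂ] H) : Prop :=
  ∀ (x : H) (i : I), ((ContinuousLinearMap.adjoint U) x : ∀ _ : I, ℂ) i = (inner ℂ (f i) x : ℂ)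

/-- K-frame. -/
def IsKFrame (K : H →L[ℂ] H) (f : I → H) : Prop :=
  ∃ A B : ℝ, 0 < A ∧ A ≤ B ∧ ∀ x : H,
    A * ‖(ContinuousLinearMap.adjoint K) x‖ ^ 2 ≤ ∑' i, ‖(inner ℂ (f i) x : ℂ)‖ ^ 2 ∧
    ∑' i, ‖(inner ℂ (f i) x : ℂ)‖ ^ 2 ≤ B * ‖x‖ ^ 2

/-- y is a K-dual Bessel sequence for f: Kx = ∑ ⟨x, y_i⟩ f_i. -/
def IsKDual (K : H →L[ℂ] H) (f y : I → H) : Prop :=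
  IsBessel y ∧ ∀ x : H, K x = ∑' i, (inner ℂ (y i) x : ℂ) • f i

end

/-!
Since `(U* x)_i = ⟨x, x_i⟩`, the frame sum `∑ |⟨x, x_i⟩|²` is `‖U* x‖²`, so `{x_i}` is a `K`-frame
exactly when `‖K* x‖ ≤ C ‖U* x‖` for some `C`; the upper frame bound is automatic from
`‖U*‖ = ‖U‖`. For `K = U L` this holds with `C = ‖L‖`. Conversely, Douglas' argument: the inequality
makes `U* x ↦ K* x` a well-defined bounded map on the range of `U*`; extend it to the closure and
precompose with the orthogonal projection onto that closure to get `M` with `M U* = K*`, and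
take `L = M*`.
-/

open ContinuousLinearMap

theorem ContinuousLinearMap.exists_comp_eq_of_norm_le {𝕜 E F G : Type*} [RCLike 𝕜]
    [NormedAddCommGroup E] [NormedSpace 𝕜 E]
    [NormedAddCommGroup F] [InnerProductSpace 𝕜 F] [CompleteSpace F]
    [NormedAddCommGroup G] [NormedSpace 𝕜 G] [CompleteSpace G]
    (A : E →L[𝕜] F) (B : E →L[𝕜] G) {C : ℝ} (h : ∀ x, ‖B x‖ ≤ C * ‖A x‖) :
    ∃ M : F →L[𝕜] G, M.comp A = B := by
  set R := LinearMap.range A.toLinearMap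
  set q := R.topologicalClosure
  let e : E →ₗ[𝕜] q :=
    A.toLinearMap.codRestrict q fun x => R.le_topologicalClosure (LinearMap.mem_range_self _ x)
  have hdense : DenseRange e := by
    rw [DenseRange, Subtype.dense_iff, ← Set.range_comp]
    exact R.topologicalClosure_coe.le
  refine ⟨((B : E →ₗ[𝕜] G).extendOfNorm e).comp q.orthogonalProjectionOnto, ?_⟩
  ext x
  have hx : q.orthogonalProjectionOnto (A x) = e x :=
    q.orthogonalProjectionOnto_mem_subspace_eq_self (e x)
  simp only [comp_apply, hx]
  exact LinearMap.extendOfNorm_eq hdense ⟨C, h⟩ x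

theorem ContinuousLinearMap.exists_eq_comp_of_norm_adjoint_le {𝕜 E F G : Type*} [RCLike 𝕜]
    [NormedAddCommGroup E] [InnerProductSpace 𝕜 E] [CompleteSpace E]
    [NormedAddCommGroup F] [InnerProductSpace 𝕜 F] [CompleteSpace F]
    [NormedAddCommGroup G] [InnerProductSpace 𝕜 G] [CompleteSpace G]
    (U : F →L[𝕜] E) (K : G →L[𝕜] E) {C : ℝ} (h : ∀ x, ‖adjoint K x‖ ≤ C * ‖adjoint U x‖) :
    ∃ L : G →L[𝕜] F, K = U.comp L := by
  obtain ⟨M, hM⟩ := exists_comp_eq_of_norm_le (adjoint U) (adjoint K) h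
  refine ⟨adjoint M, ?_⟩
  rw [← adjoint_adjoint K, ← hM, adjoint_comp, adjoint_adjoint]

namespace IsSynthesisOf

variable {H : Type*} [NormedAddCommGroup H] [InnerProductSpace ℂ H] [CompleteSpace H]
  {I : Type*} {f : I → H} {U : lp (fun _ : I => ℂ) 2 →L[ℂ] H}

theorem tsum_norm_inner_sq (hU : IsSynthesisOf f U) (x : H) :
    ∑' i, ‖(inner ℂ (f i) x : ℂ)‖ ^ 2 = ‖adjoint U x‖ ^ 2 := by
  have h := lp.norm_rpow_eq_tsum (by norm_num : (0 : ℝ) < (2 : ENNReal).toReal) (adjoint U x)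
  simp only [ENNReal.toReal_ofNat, Real.rpow_ofNat] at h
  simp only [h, hU x]

theorem isKFrame_iff (hU : IsSynthesisOf f U) {K : H →L[ℂ] H} :
    IsKFrame K f ↔ ∃ C : ℝ, ∀ x, ‖adjoint K x‖ ≤ C * ‖adjoint U x‖ := by
  simp only [IsKFrame, hU.tsum_norm_inner_sq]
  constructor
  · rintro ⟨A, B, hA, -, hAB⟩
    refine ⟨(√A)⁻¹, fun x => ?_⟩
    rw [← div_eq_inv_mul, le_div_iff₀' (by positivity)]
    calc √A * ‖adjoint K x‖ = √(A * ‖adjoint K x‖ ^ 2) := by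
          rw [Real.sqrt_mul hA.le, Real.sqrt_sq (norm_nonneg _)]
      _ ≤ √(‖adjoint U x‖ ^ 2) := Real.sqrt_le_sqrt (hAB x).1
      _ = ‖adjoint U x‖ := Real.sqrt_sq (norm_nonneg _)
  · rintro ⟨C, hC⟩
    refine ⟨(C ^ 2 + 1)⁻¹, max (C ^ 2 + 1)⁻¹ (‖U‖ ^ 2), by positivity, le_max_left _ _,
      fun x => ⟨?_, ?_⟩⟩
    · rw [inv_mul_le_iff₀ (by positivity)]
      have := pow_le_pow_left₀ (norm_nonneg _) (hC x) 2
      nlinarith [sq_nonneg ‖adjoint U x‖]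
    · calc ‖adjoint U x‖ ^ 2 ≤ (‖U‖ * ‖x‖) ^ 2 := by
            gcongr
            simpa only [adjoint.norm_map] using (adjoint U).le_opNorm x
        _ ≤ max (C ^ 2 + 1)⁻¹ (‖U‖ ^ 2) * ‖x‖ ^ 2 := by
            rw [mul_pow]; gcongr; exact le_max_right _ _

end IsSynthesisOf

theorem stmt17_general {H : Type*} [NormedAddCommGroup H] [InnerProductSpace ℂ H] [CompleteSpace H]
    {I : Type*}
    (f : I → H)
    (U : lp (fun _ : I => ℂ) 2 →L[ℂ] H) (hU : IsSynthesisOf f U) :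
    (∀ L : H →L[ℂ] lp (fun _ : I => ℂ) 2, IsKFrame (U.comp L) f) ∧
    (∀ K : H →L[ℂ] H, IsKFrame K f → ∃ L : H →L[ℂ] lp (fun _ : I => ℂ) 2, K = U.comp L) := by
  refine ⟨fun L => hU.isKFrame_iff.2 ⟨‖L‖, fun x => ?_⟩, fun K hK => ?_⟩
  · rw [adjoint_comp, comp_apply, ← adjoint.norm_map L]
    exact (adjoint L).le_opNorm _
  · obtain ⟨C, hC⟩ := hU.isKFrame_iff.1 hK
    exact exists_eq_comp_of_norm_adjoint_le U K hC

theorem stmt17 {H : Type*} [NormedAddCommGroup H] [InnerProductSpace ℂ H] [CompleteSpace H]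
    {I : Type*} [Countable I] [DecidableEq I]
    (f : I → H) (hf : IsBessel f)
    (U : lp (fun _ : I => ℂ) 2 →L[ℂ] H) (hU : IsSynthesisOf f U) :
    (∀ L : H →L[ℂ] lp (fun _ : I => ℂ) 2, IsKFrame (U.comp L) f) ∧
    (∀ K : H →L[ℂ] H, IsKFrame K f → ∃ L : H →L[ℂ] lp (fun _ : I => ℂ) 2, K = U.comp L) :=
  stmt17_general f U hU
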